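/- If T is a tree with radius r on n vertices, then W(T) − ε(T) = W(L(T)) − ε(L(T)) + n(n−3)/2 − r + 1. -/

import Mathlib

open Finset

/-- The Wiener index: sum of distances over unordered pairs of vertices. -/
noncomputable def wiener {V : Type*} [Fintype V] (G : SimpleGraph V) : ℕ :=
  (∑ u : V, ∑ v : V, G.dist u v) / 2

/-- The eccentricity of a vertex. -/
noncomputable def eccVert {V : Type*} [Fintype V] (G : SimpleGraph V) (v : V) : ℕ :=
  univ.sup (G.dist v)

/-- The eccentricity (total eccentricity) of a graph. -/
noncomputable def eccSum {V : Type*} [Fintype V] (G : SimpleGraph V) : ℕ :=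
  ∑ v : V, eccVert G v

/-- The radius of a graph: the minimum eccentricity. -/
noncomputable def graphRad {V : Type*} [Fintype V] [Nonempty V]
    (G : SimpleGraph V) : ℕ :=
  univ.inf' univ_nonempty (eccVert G)

/-!
Root the tree at a centre `c` and send each vertex `u ≠ c` to the edge joining it to its parent,
its neighbour towards `c`; this is a bijection from `V ∖ {c}` onto the vertices of `L(T)`. The
parent edges of `u` and `v` are at distance `d(u, v)` in `L(T)` when one of `u`, `v` lies on the
path from the other to `c`, and at distance `d(u, v) - 1` otherwise. As exactly `d(u, c) + 1`
vertices lie on the path from `u` to `c`, summing gives `W(T) = W(L(T)) + n(n-1)/2`. The parent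
edge of `u` has eccentricity `e(u) - 1` in `L(T)`; for the vertices `w` below `u` this uses that
moving towards a centre does not increase eccentricity, so `d(u, w) + 1 = d(parent u, w) ≤ e(u)`.
Summing, `ε(T) = ε(L(T)) + r + n - 1`.
-/

namespace SimpleGraph

variable {V : Type*} {G : SimpleGraph V}

section Metric

variable {u v x y z c : V}

lemma Walk.dist_add_dist_eq_of_mem_support {p : G.Walk u v} (hp : p.length = G.dist u v)
    (hz : z ∈ p.support) : G.dist u z + G.dist z v = G.dist u v := by
  classical
  have hsplit := congrArg Walk.length (p.take_spec hz)
  rw [Walk.length_append] at hsplit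
  have := dist_le (p.takeUntil z hz)
  have := dist_le (p.dropUntil z hz)
  have := (p.dropUntil z hz).reachable.dist_triangle_right u
  omega

lemma dist_le_one_of_mem_edgeSet {e : Sym2 V} (he : e ∈ G.edgeSet) (hx : x ∈ e) (hy : y ∈ e) :
    G.dist x y ≤ 1 := by
  induction e using Sym2.ind with
  | _ a b =>
    rw [Sym2.mem_iff] at hx hy
    have hab : G.Adj a b := he
    rcases hx with rfl | rfl <;> rcases hy with rfl | rfl <;>
      simp [dist_eq_one_iff_adj.2, hab, hab.symm]

lemma Connected.exists_adj_dist_add_one_eq (hG : G.Connected) (h : u ≠ v) :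
    ∃ x, G.Adj u x ∧ G.dist x v + 1 = G.dist u v := by
  obtain ⟨p, hp⟩ := hG.exists_walk_length_eq_dist u v
  have hnil : ¬ p.Nil := by
    rw [← Walk.length_eq_zero_iff, hp]
    exact (hG.pos_dist_of_ne h).ne'
  refine ⟨p.snd, p.adj_snd hnil, le_antisymm ?_ ?_⟩
  · have := dist_le p.tail
    have := p.length_tail_add_one hnil
    omega
  · have := hG.dist_triangle (u := u) (v := p.snd) (w := v)
    rw [dist_eq_one_iff_adj.2 (p.adj_snd hnil)] at this
    omega

open Classical in
variable (G) in
noncomputable def parent (c u : V) : V :=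
  if h : ∃ x, G.Adj u x ∧ G.dist x c + 1 = G.dist u c then h.choose else u

lemma Connected.adj_parent (hG : G.Connected) (hu : u ≠ c) : G.Adj u (G.parent c u) := by
  have h := hG.exists_adj_dist_add_one_eq hu
  rw [parent, dif_pos h]
  exact h.choose_spec.1

lemma Connected.dist_parent_add_one (hG : G.Connected) (hu : u ≠ c) :
    G.dist (G.parent c u) c + 1 = G.dist u c := by
  have h := hG.exists_adj_dist_add_one_eq hu
  rw [parent, dif_pos h]
  exact h.choose_spec.2

lemma IsAcyclic.eq_of_isPath (hG : G.IsAcyclic) {p q : G.Walk u v} (hp : p.IsPath)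
    (hq : q.IsPath) : p = q :=
  congrArg Subtype.val ((hG.subsingleton_path u v).elim ⟨p, hp⟩ ⟨q, hq⟩)

lemma IsAcyclic.length_eq_dist (hG : G.IsAcyclic) {p : G.Walk u v} (hp : p.IsPath) :
    p.length = G.dist u v := by
  obtain ⟨q, hq, hql⟩ := p.reachable.exists_path_of_dist
  rw [hG.eq_of_isPath hp hq, hql]

lemma IsAcyclic.support_subset_support (hG : G.IsAcyclic) {p : G.Walk u v} (hp : p.IsPath)
    (q : G.Walk u v) : p.support ⊆ q.support := by
  classical
  rw [hG.eq_of_isPath hp q.bypass_isPath]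
  exact q.support_bypass_subset_support

lemma IsTree.mem_support_iff_dist_add_dist_eq (hG : G.IsTree) {p : G.Walk u v}
    (hp : p.IsPath) : z ∈ p.support ↔ G.dist u z + G.dist z v = G.dist u v := by
  refine ⟨p.dist_add_dist_eq_of_mem_support (hG.isAcyclic.length_eq_dist hp), fun h => ?_⟩
  obtain ⟨q, hq⟩ := hG.connected.exists_walk_length_eq_dist u z
  obtain ⟨r, hr⟩ := hG.connected.exists_walk_length_eq_dist z v
  have hqr : (q.append r).IsPath := (q.append r).isPath_of_length_eq_dist (by simp [hq, hr, h])
  exact hG.isAcyclic.support_subset_support hqr p (by simp)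

lemma IsTree.dist_eq_add_one_or (hG : G.IsTree) (h : G.Adj x y) (v : V) :
    G.dist v y = G.dist v x + 1 ∨ G.dist v x = G.dist v y + 1 := by
  obtain ⟨p, hp, -⟩ := hG.connected.exists_path_of_dist v x
  obtain ⟨q, hq, -⟩ := hG.connected.exists_path_of_dist v y
  by_cases hx : x ∈ q.support
  · rw [hG.mem_support_iff_dist_add_dist_eq hq, dist_eq_one_iff_adj.2 h] at hx
    omega
  · have hy := hG.isAcyclic.mem_support_of_ne_mem_support_of_adj_of_isPath hp hq h hx
    rw [hG.mem_support_iff_dist_add_dist_eq hp, dist_eq_one_iff_adj.2 h.symm] at hy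
    omega

lemma IsTree.dist_parent_or (hG : G.IsTree) (hu : u ≠ c) (v : V) :
    G.dist (G.parent c u) v + 1 = G.dist u v ∨ G.dist v u + G.dist u c = G.dist v c := by
  have hpc := hG.connected.dist_parent_add_one hu
  have hup := dist_eq_one_iff_adj.2 (hG.connected.adj_parent hu)
  rcases hG.dist_eq_add_one_or (hG.connected.adj_parent hu) v with h | h
  · right
    -- the path from `u` to `c` runs through the parent and lies inside the walk `u → v → c`
    obtain ⟨a, ha, -⟩ := hG.connected.exists_path_of_dist u c
    obtain ⟨b, hb, -⟩ := hG.connected.exists_path_of_dist u v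
    obtain ⟨d, hd, -⟩ := hG.connected.exists_path_of_dist v c
    have hmem : G.parent c u ∈ a.support := by
      rw [hG.mem_support_iff_dist_add_dist_eq ha]
      omega
    rcases (Walk.mem_support_append_iff b d).1
      (hG.isAcyclic.support_subset_support ha (b.append d) hmem) with hb' | hd'
    · rw [hG.mem_support_iff_dist_add_dist_eq hb] at hb'
      rw [dist_comm (u := v), dist_comm (u := v)] at h
      omega
    · rw [hG.mem_support_iff_dist_add_dist_eq hd] at hd'
      omega
  · left
    rw [dist_comm (u := v), dist_comm (u := v)] at h
    omega

end Metric

section LineGraph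

variable {x y : V} {e f : G.edgeSet}

lemma exists_lineGraph_walk_length_le (p : G.Walk x y) (hx : x ∈ (e : Sym2 V))
    (hy : y ∈ (f : Sym2 V)) : ∃ q : G.lineGraph.Walk e f, q.length ≤ p.length + 1 := by
  induction p generalizing e with
  | nil =>
    by_cases hef : e = f
    · exact ⟨.copy .nil rfl hef, by simp⟩
    · exact ⟨.cons (lineGraph_adj_iff_exists.2 ⟨hef, _, hx, hy⟩) .nil, by simp⟩
  | @cons x a _ hxa p ih =>
    obtain ⟨q, hq⟩ := ih (e := ⟨s(x, a), hxa⟩) (Sym2.mem_mk_right _ _) hy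
    by_cases he : e = ⟨s(x, a), hxa⟩
    · exact ⟨q.copy he.symm rfl, by simp; omega⟩
    · refine ⟨.cons (lineGraph_adj_iff_exists.2 ⟨he, x, hx, Sym2.mem_mk_left _ _⟩) q, ?_⟩
      simp only [Walk.length_cons]
      omega

lemma Connected.dist_le_length_add_one_of_lineGraph_walk (hG : G.Connected)
    (q : G.lineGraph.Walk e f) (hx : x ∈ (e : Sym2 V)) (hy : y ∈ (f : Sym2 V)) :
    G.dist x y ≤ q.length + 1 := by
  induction q generalizing x with
  | nil => exact dist_le_one_of_mem_edgeSet (Subtype.prop _) hx hy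
  | @cons e g _ h q ih =>
    obtain ⟨-, z, hze, hzg⟩ := lineGraph_adj_iff_exists.1 h
    have := dist_le_one_of_mem_edgeSet e.2 hx hze
    have := ih hzg hy
    have := hG.dist_triangle (u := x) (v := z) (w := y)
    simp only [Walk.length_cons]
    omega

lemma Connected.lineGraph_dist_le (hG : G.Connected) (hx : x ∈ (e : Sym2 V))
    (hy : y ∈ (f : Sym2 V)) : G.lineGraph.dist e f ≤ G.dist x y + 1 := by
  obtain ⟨p, hp⟩ := hG.exists_walk_length_eq_dist x y
  obtain ⟨q, hq⟩ := exists_lineGraph_walk_length_le p hx hy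
  exact (dist_le q).trans (hp ▸ hq)

lemma Connected.dist_le_lineGraph_dist_add_one (hG : G.Connected) (hx : x ∈ (e : Sym2 V))
    (hy : y ∈ (f : Sym2 V)) : G.dist x y ≤ G.lineGraph.dist e f + 1 := by
  obtain ⟨p, -⟩ := hG.exists_walk_length_eq_dist x y
  obtain ⟨q, -⟩ := exists_lineGraph_walk_length_le p hx hy
  obtain ⟨r, hr⟩ := q.reachable.exists_walk_length_eq_dist
  exact hr ▸ hG.dist_le_length_add_one_of_lineGraph_walk r hx hy

end LineGraph

section ParentEdge

variable {c : V}

noncomputable def parentEdge (hG : G.Connected) (c : V) (u : {u // u ≠ c}) : G.edgeSet :=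
  ⟨s(u, G.parent c u), hG.adj_parent u.2⟩

lemma parentEdge_injective (hG : G.Connected) : Function.Injective (parentEdge hG c) := by
  intro u v h
  rcases Sym2.eq_iff.1 (congrArg Subtype.val h) with ⟨h₁, -⟩ | ⟨h₁, h₂⟩
  · exact Subtype.ext h₁
  · have hu := hG.dist_parent_add_one u.2
    have hv := hG.dist_parent_add_one v.2
    rw [h₂] at hu
    rw [← h₁] at hv
    omega

lemma IsTree.bijective_parentEdge [Fintype V] [Fintype G.edgeSet] (hG : G.IsTree) :
    Function.Bijective (parentEdge hG.connected c) := by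
  classical
  refine (Fintype.bijective_iff_injective_and_card _).2 ⟨parentEdge_injective _, ?_⟩
  have := hG.card_edgeFinset
  rw [edgeFinset_card] at this
  rw [Fintype.card_subtype_compl, Fintype.card_subtype_eq]
  omega

variable {u v : {u // u ≠ c}}

lemma IsTree.lineGraph_dist_parentEdge_of_dist_add_dist_eq (hG : G.IsTree)
    (h : G.dist u v + G.dist v c = G.dist u c) :
    G.lineGraph.dist (parentEdge hG.connected c u) (parentEdge hG.connected c v) =
      G.dist u v := by
  obtain rfl | huv := eq_or_ne u v
  · simp
  have hle := hG.connected.lineGraph_dist_le (e := parentEdge hG.connected c u)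
    (f := parentEdge hG.connected c v) (Sym2.mem_mk_right _ _) (Sym2.mem_mk_left _ _)
  have hge := hG.connected.dist_le_lineGraph_dist_add_one (e := parentEdge hG.connected c u)
    (f := parentEdge hG.connected c v) (Sym2.mem_mk_left _ _) (Sym2.mem_mk_right _ _)
  have := hG.connected.dist_triangle (u := (u : V)) (v := G.parent c v) (w := c)
  have := hG.connected.dist_parent_add_one v.2
  rcases hG.dist_parent_or u.2 v with h' | h'
  · omega
  · have hpos := hG.connected.pos_dist_of_ne (Subtype.coe_ne_coe.2 huv)
    rw [dist_comm] at h'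
    omega

lemma IsTree.lineGraph_dist_parentEdge_add_one (hG : G.IsTree)
    (h₁ : G.dist u v + G.dist v c ≠ G.dist u c) (h₂ : G.dist v u + G.dist u c ≠ G.dist v c) :
    G.lineGraph.dist (parentEdge hG.connected c u) (parentEdge hG.connected c v) + 1 =
      G.dist u v := by
  have hle := hG.connected.lineGraph_dist_le (e := parentEdge hG.connected c u)
    (f := parentEdge hG.connected c v) (Sym2.mem_mk_right _ _) (Sym2.mem_mk_right _ _)
  have hge := hG.connected.dist_le_lineGraph_dist_add_one (e := parentEdge hG.connected c u)
    (f := parentEdge hG.connected c v) (Sym2.mem_mk_left _ _) (Sym2.mem_mk_left _ _)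
  have := hG.connected.dist_parent_add_one u.2
  have hu := (hG.dist_parent_or u.2 v).resolve_right h₂
  rcases hG.dist_parent_or v.2 (G.parent c u) with hv | hv
  · rw [dist_comm (u := G.parent c v), dist_comm (u := (v : V))] at hv
    omega
  · omega

lemma IsTree.natCast_dist_eq_lineGraph_dist [DecidableEq V] (hG : G.IsTree) :
    (G.dist u v : ℤ) =
      G.lineGraph.dist (parentEdge hG.connected c u) (parentEdge hG.connected c v) + 1
        - (if G.dist u v + G.dist v c = G.dist u c then 1 else 0)
        - (if G.dist v u + G.dist u c = G.dist v c then 1 else 0)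
        + (if u = v then 1 else 0) := by
  obtain rfl | huv := eq_or_ne u v
  · simp
  have hpos := hG.connected.pos_dist_of_ne (Subtype.coe_ne_coe.2 huv)
  have hcomm : G.dist (v : V) u = G.dist u v := dist_comm
  by_cases h₁ : G.dist u v + G.dist v c = G.dist u c
  · have h₂ : G.dist v u + G.dist u c ≠ G.dist v c := by omega
    rw [hG.lineGraph_dist_parentEdge_of_dist_add_dist_eq h₁, if_pos h₁, if_neg h₂, if_neg huv]
    ring
  by_cases h₂ : G.dist v u + G.dist u c = G.dist v c
  · rw [dist_comm (G := G.lineGraph), hG.lineGraph_dist_parentEdge_of_dist_add_dist_eq h₂]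
    rw [if_neg h₁, if_pos h₂, if_neg huv, hcomm]
    ring
  · rw [if_neg h₁, if_neg h₂, if_neg huv, ← hG.lineGraph_dist_parentEdge_add_one h₁ h₂]
    push_cast
    ring

end ParentEdge

section Finite

variable [Fintype V] {c u : V}

lemma dist_le_eccVert (v w : V) : G.dist v w ≤ eccVert G v :=
  Finset.le_sup (mem_univ w)

lemma eccVert_le_iff {v : V} {k : ℕ} : eccVert G v ≤ k ↔ ∀ w, G.dist v w ≤ k := by
  simp [eccVert]

variable (G) in
lemma exists_dist_eq_eccVert (v : V) : ∃ w, G.dist v w = eccVert G v := by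
  obtain ⟨w, -, hw⟩ := Finset.exists_mem_eq_sup univ ⟨v, mem_univ v⟩ (G.dist v)
  exact ⟨w, hw.symm⟩

lemma IsTree.eccVert_parent_le (hG : G.IsTree) (hc : ∀ w, eccVert G c ≤ eccVert G w)
    (hu : u ≠ c) : eccVert G (G.parent c u) ≤ eccVert G u := by
  rw [eccVert_le_iff]
  intro w
  have := dist_le_eccVert (G := G) u w
  rcases hG.dist_parent_or hu w with h | h
  · omega
  · have := hG.connected.dist_triangle (u := G.parent c u) (v := u) (w := w)
    have := dist_eq_one_iff_adj.2 (hG.connected.adj_parent hu).symm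
    have := hG.connected.pos_dist_of_ne hu
    have := dist_le_eccVert (G := G) c w
    have := hc u
    rw [dist_comm (u := w), dist_comm (u := w)] at h
    omega

lemma IsTree.lineGraph_dist_parentEdge_add_one_le_eccVert (hG : G.IsTree)
    (hc : ∀ w, eccVert G c ≤ eccVert G w) (u w : {u // u ≠ c}) :
    G.lineGraph.dist (parentEdge hG.connected c u) (parentEdge hG.connected c w) + 1 ≤
      eccVert G u := by
  have := dist_le_eccVert (G := G) u w
  by_cases h₁ : G.dist w u + G.dist u c = G.dist w c
  · rw [dist_comm, hG.lineGraph_dist_parentEdge_of_dist_add_dist_eq h₁]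
    have := hG.connected.dist_triangle (u := (w : V)) (v := G.parent c u) (w := c)
    have := hG.connected.dist_parent_add_one u.2
    have := dist_le_eccVert (G := G) (G.parent c u) w
    have := hG.eccVert_parent_le hc u.2
    have : G.dist (w : V) (G.parent c u) = G.dist (G.parent c u) w := dist_comm
    omega
  by_cases h₂ : G.dist u w + G.dist w c = G.dist u c
  · rw [hG.lineGraph_dist_parentEdge_of_dist_add_dist_eq h₂]
    have := hG.connected.pos_dist_of_ne w.2
    have := dist_le_eccVert (G := G) u c
    omega
  · rw [hG.lineGraph_dist_parentEdge_add_one h₂ h₁]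
    exact this

lemma Connected.eccVert_le_eccVert_lineGraph_add_one [Fintype G.edgeSet] (hG : G.Connected)
    {e : G.edgeSet} (hu : u ∈ (e : Sym2 V)) : eccVert G u ≤ eccVert G.lineGraph e + 1 := by
  obtain ⟨x, hx⟩ := exists_dist_eq_eccVert G u
  obtain rfl | hxu := eq_or_ne x u
  · simp [← hx]
  obtain ⟨y, hxy, -⟩ := hG.exists_adj_dist_add_one_eq hxu
  have := hG.dist_le_lineGraph_dist_add_one (f := ⟨s(x, y), hxy⟩) hu (Sym2.mem_mk_left _ _)
  have := dist_le_eccVert (G := G.lineGraph) e ⟨s(x, y), hxy⟩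
  omega

lemma IsTree.eccVert_lineGraph_parentEdge [Fintype G.edgeSet] (hG : G.IsTree)
    (hc : ∀ w, eccVert G c ≤ eccVert G w) (u : {u // u ≠ c}) :
    eccVert G.lineGraph (parentEdge hG.connected c u) + 1 = eccVert G u := by
  refine le_antisymm ?_ (hG.connected.eccVert_le_eccVert_lineGraph_add_one (Sym2.mem_mk_left _ _))
  have hle := hG.lineGraph_dist_parentEdge_add_one_le_eccVert hc u
  have hbound : ∀ f, G.lineGraph.dist (parentEdge hG.connected c u) f ≤ eccVert G u - 1 := by
    intro f
    obtain ⟨w, rfl⟩ := (hG.bijective_parentEdge (c := c)).2 f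
    exact Nat.le_sub_of_add_le (hle w)
  have := hle u
  rw [dist_self] at this
  have := eccVert_le_iff.2 hbound
  omega

variable (G) in
lemma two_mul_wiener :
    2 * wiener G = ∑ u, ∑ v, G.dist u v := by
  let : LinearOrder V := LinearOrder.lift' _ (Fintype.equivFin V).injective
  have hsplit : ∀ u v, G.dist u v =
      (if u < v then G.dist u v else 0) + (if v < u then G.dist v u else 0) := by
    intro u v
    rcases lt_trichotomy u v with h | rfl | h
    · simp [h, h.not_gt]
    · simp
    · simp [h, h.not_gt, SimpleGraph.dist_comm]
  have hsum : ∑ u, ∑ v, G.dist u v = 2 * ∑ u, ∑ v, if u < v then G.dist u v else 0 := by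
    rw [sum_congr rfl fun u _ => sum_congr rfl fun v _ => hsplit u v]
    simp only [sum_add_distrib]
    rw [sum_comm (f := fun u v => if v < u then G.dist v u else 0)]
    ring
  rw [wiener, hsum, Nat.mul_div_cancel_left _ two_pos]

lemma IsTree.card_filter_dist_add_dist_eq (hG : G.IsTree) (u v : V) :
    #{z | G.dist u z + G.dist z v = G.dist u v} = G.dist u v + 1 := by
  classical
  obtain ⟨p, hp, hpl⟩ := hG.connected.exists_path_of_dist u v
  have : ({z | G.dist u z + G.dist z v = G.dist u v} : Finset V) = p.support.toFinset := by
    ext z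
    simp [hG.mem_support_iff_dist_add_dist_eq hp]
  rw [this, List.toFinset_card_of_nodup hp.support_nodup, Walk.length_support, hpl]

variable (G c) in
lemma sum_sum_dist_eq_add_sum_subtype_ne [DecidableEq V] :
    ∑ u, ∑ v, G.dist u v = 2 * ∑ u : {u // u ≠ c}, G.dist u c +
      ∑ u : {u // u ≠ c}, ∑ v : {u // u ≠ c}, G.dist u v := by
  simp only [Fintype.sum_eq_add_sum_subtype_ne _ c, dist_self, zero_add, sum_add_distrib]
  simp only [dist_comm (u := c)]
  ring

lemma IsTree.sum_ite_dist_add_dist_eq [DecidableEq V] (hG : G.IsTree) (u : V) :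
    ∑ v : {v // v ≠ c}, (if G.dist u v + G.dist v c = G.dist u c then (1 : ℤ) else 0) =
      G.dist u c := by
  have := Fintype.sum_eq_add_sum_subtype_ne
    (fun v => if G.dist u v + G.dist v c = G.dist u c then (1 : ℤ) else 0) c
  rw [sum_boole, hG.card_filter_dist_add_dist_eq] at this
  simp only [dist_self, add_zero, if_true] at this
  push_cast at this
  linarith

variable (c) in
lemma IsTree.sum_sum_natCast_dist_subtype_ne [DecidableEq V] (hG : G.IsTree) :
    ∑ u : {u // u ≠ c}, ∑ v : {u // u ≠ c}, (G.dist u v : ℤ) =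
      ∑ u : {u // u ≠ c}, ∑ v : {u // u ≠ c},
        (G.lineGraph.dist (parentEdge hG.connected c u) (parentEdge hG.connected c v) : ℤ) +
      Fintype.card {u // u ≠ c} * Fintype.card {u // u ≠ c} -
      2 * ∑ u : {u // u ≠ c}, (G.dist u c : ℤ) + Fintype.card {u // u ≠ c} := by
  simp only [hG.natCast_dist_eq_lineGraph_dist, sum_add_distrib, sum_sub_distrib,
    hG.sum_ite_dist_add_dist_eq, sum_const, card_univ, Fintype.sum_ite_eq]
  rw [sum_comm (f := fun u v : {u // u ≠ c} =>
    if G.dist (v : V) u + G.dist (u : V) c = G.dist (v : V) c then (1 : ℤ) else 0)]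
  simp only [hG.sum_ite_dist_add_dist_eq]
  ring

theorem IsTree.wiener_eq_wiener_lineGraph_add_choose [Fintype G.edgeSet] (hG : G.IsTree) :
    wiener G = wiener G.lineGraph + (Fintype.card V).choose 2 := by
  classical
  obtain ⟨c⟩ := hG.connected.nonempty
  let φ := Equiv.ofBijective _ (hG.bijective_parentEdge (c := c))
  have hL : ∑ e, ∑ f, G.lineGraph.dist e f =
      ∑ u : {u // u ≠ c}, ∑ v : {u // u ≠ c},
        G.lineGraph.dist (parentEdge hG.connected c u) (parentEdge hG.connected c v) := by
    rw [← φ.sum_comp]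
    simp only [← φ.sum_comp (fun f => G.lineGraph.dist _ f)]
    rfl
  have hm : Fintype.card V = Fintype.card {u // u ≠ c} + 1 := by
    have := Fintype.card_pos_iff.2 ⟨c⟩
    rw [Fintype.card_subtype_compl, Fintype.card_subtype_eq]
    omega
  have hW := congrArg (Nat.cast : ℕ → ℤ) (two_mul_wiener G)
  have hWL := congrArg (Nat.cast : ℕ → ℤ) (two_mul_wiener G.lineGraph)
  have hchoose := Nat.add_one_mul_choose_eq (Fintype.card {u // u ≠ c}) 1
  have hS := hG.sum_sum_natCast_dist_subtype_ne c
  rw [sum_sum_dist_eq_add_sum_subtype_ne G c] at hW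
  rw [hL] at hWL
  rw [Nat.choose_one_right] at hchoose
  push_cast at hW hWL
  zify at hchoose ⊢
  rw [hm]
  push_cast at hchoose ⊢
  linarith

theorem IsTree.eccSum_eq [Nonempty V] [Fintype G.edgeSet] (hG : G.IsTree) :
    eccSum G = eccSum G.lineGraph + graphRad G + (Fintype.card V - 1) := by
  classical
  obtain ⟨c, -, hc⟩ := exists_mem_eq_inf' univ_nonempty (eccVert G)
  have hmin : ∀ w, eccVert G c ≤ eccVert G w := fun w => hc ▸ inf'_le _ (mem_univ w)
  let φ := Equiv.ofBijective _ (hG.bijective_parentEdge (c := c))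
  rw [eccSum, eccSum, graphRad, hc, Fintype.sum_eq_add_sum_subtype_ne _ c, ← φ.sum_comp]
  simp only [φ, Equiv.ofBijective_apply, ← hG.eccVert_lineGraph_parentEdge hmin,
    sum_add_distrib, sum_const, card_univ, Fintype.card_subtype_compl, Fintype.card_subtype_eq,
    smul_eq_mul, mul_one]
  omega

end Finite

end SimpleGraph

theorem stmt_15_general {V : Type*} [Fintype V] [Nonempty V]
    (T : SimpleGraph V) [DecidableRel T.Adj] (hT : T.IsTree) :
    (wiener T : ℚ) - eccSum T =
      (wiener T.lineGraph : ℚ) - eccSum T.lineGraph +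
        (Fintype.card V : ℚ) * (Fintype.card V - 3) / 2 - graphRad T + 1 := by
  have hn : 1 ≤ Fintype.card V := Fintype.card_pos
  rw [hT.wiener_eq_wiener_lineGraph_add_choose, hT.eccSum_eq]
  push_cast [Nat.cast_choose_two, Nat.cast_sub hn]
  ring

theorem stmt_15 {V : Type*} [Fintype V] [Nonempty V] [DecidableEq V]
    (T : SimpleGraph V) [DecidableRel T.Adj] (hT : T.IsTree)
    (hn : 2 ≤ Fintype.card V) :
    (wiener T : ℚ) - eccSum T =
      (wiener T.lineGraph : ℚ) - eccSum T.lineGraph +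
        (Fintype.card V : ℚ) * (Fintype.card V - 3) / 2 - graphRad T + 1 :=
  stmt_15_general T hT
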